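/- arXiv:1307.2923 — 4 statements merged into one kernel-verified Lean document; each statement's English description precedes it below -/
import Mathlib

section
/- For x ≥ 1/c (with c = κt² + κr² + κt² κr² > 0), the SNDR expression ρ1 ρ2 / (ρ_i² (P_i/P_{r_i}) c + ρ1 ρ2 c + ρ_{r_i} b_i + ρ_i (a_i + (P_i/P_{r_i}) b_i) + N_i N3/(P_{r_i} P3)) is strictly less than x for all ρ1, ρ2 > 0; equivalently SNDR_i < 1/c always holds, so the outage probability at threshold x ≥ 1/c equals 1. -/
/-- For every threshold `x ≥ 1/c` the SNDR (8) is strictly below `x`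
(equivalently, `SNDR < 1/c` always holds), so the outage probability at such a
threshold equals one. -/
theorem sndr_ceiling
    (Pi Pri P3 Ni N3 : ℝ) (κt κr : ℝ)
    (hPi : 0 < Pi) (hPri : 0 < Pri) (hP3 : 0 < P3)
    (hNi : 0 < Ni) (hN3 : 0 < N3)
    (hκt : 0 ≤ κt) (hκr : 0 ≤ κr)
    (a b c : ℝ)
    (ha : a = N3 / Pri * (1 + κt ^ 2))
    (hb : b = Ni / P3 * (1 + κr ^ 2))
    (hc : c = κt ^ 2 + κr ^ 2 + κt ^ 2 * κr ^ 2)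
    (hcpos : 0 < c)
    (x : ℝ) (hx : 1 / c ≤ x) :
    ∀ ρi ρri : ℝ, 0 < ρi → 0 < ρri →
      ρi * ρri /
        (ρi ^ 2 * (Pi / Pri) * c + ρi * ρri * c + ρri * b +
          ρi * (a + (Pi / Pri) * b) + Ni * N3 / (Pri * P3)) < x := by
  intro ρi ρri hρi hρri
  have hapos : 0 < a := by rw [ha]; positivity
  have hbpos : 0 < b := by rw [hb]; positivity
  have hPP : 0 < Pi / Pri := div_pos hPi hPri
  have hNN : 0 < Ni * N3 / (Pri * P3) := by positivity
  have key : ρi * ρri * c < ρi ^ 2 * (Pi / Pri) * c + ρi * ρri * c + ρri * b +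
      ρi * (a + (Pi / Pri) * b) + Ni * N3 / (Pri * P3) := by
    nlinarith [mul_pos (mul_pos (pow_pos hρi 2) hPP) hcpos,
      mul_pos hρri hbpos, mul_pos hρi (add_pos hapos (mul_pos hPP hbpos))]
  have hDpos : 0 < ρi ^ 2 * (Pi / Pri) * c + ρi * ρri * c + ρri * b +
      ρi * (a + (Pi / Pri) * b) + Ni * N3 / (Pri * P3) := by
    nlinarith [mul_pos (mul_pos hρi hρri) hcpos]
  have h1 : ρi * ρri / (ρi ^ 2 * (Pi / Pri) * c + ρi * ρri * c + ρri * b +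
      ρi * (a + (Pi / Pri) * b) + Ni * N3 / (Pri * P3)) < 1 / c := by
    rw [div_lt_div_iff₀ hDpos hcpos]
    nlinarith
  exact lt_of_lt_of_le h1 hx
end

section
/- Let ρ1, ρ2 be independent exponential random variables with means Ω1, Ω2 > 0, c > 0, and define SNDR_i^∞ = ρ_{r_i} / ((ρ1 + ρ2) c) where r_1 = 2, r_2 = 1. Then for 0 ≤ x < 1/c, Pr{SNDR_i^∞ ≤ x} = Ω_i c x / (Ω_{r_i} + c x (Ω_i - Ω_{r_i})), and for x ≥ 1/c, Pr{SNDR_i^∞ ≤ x} = 1. -/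
open MeasureTheory ProbabilityTheory Real Set

lemma expMeasure_Iic' {r : ℝ} (hr : 0 < r) (y : ℝ) :
    expMeasure r (Iic y) = ENNReal.ofReal (if 0 ≤ y then 1 - rexp (-(r * y)) else 0) := by
  rw [expMeasure, gammaMeasure, withDensity_apply _ measurableSet_Iic]
  exact lintegral_exponentialPDF_eq_antiDeriv hr y

lemma expMeasure_survival' {r : ℝ} (hr : 0 < r) {s : ℝ} (hs : 0 ≤ s) :
    expMeasure r {y | s < y} = ENNReal.ofReal (rexp (-(r * s))) := by
  have hP : IsProbabilityMeasure (expMeasure r) := isProbabilityMeasure_expMeasure hr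
  have h1 : {y : ℝ | s < y} = (Iic s)ᶜ := by ext y; simp [mem_Iic, not_le]
  rw [h1, measure_compl measurableSet_Iic (measure_ne_top _ _), measure_univ,
    expMeasure_Iic' hr, if_pos hs]
  have he : rexp (-(r * s)) ≤ 1 := exp_le_one_iff.2 (by nlinarith)
  refine ENNReal.sub_eq_of_eq_add ENNReal.ofReal_ne_top ?_
  rw [← ENNReal.ofReal_add (by positivity) (by linarith)]
  norm_num

lemma integral_exp_neg_mul_Ioi_zero' {b : ℝ} (hb : 0 < b) :
    ∫ t in Ioi (0:ℝ), rexp (-(b * t)) = 1 / b := by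
  have h := integral_comp_mul_left_Ioi (fun u => rexp (-u)) 0 hb
  simp only [mul_zero] at h
  calc ∫ t in Ioi (0:ℝ), rexp (-(b * t)) = b⁻¹ • ∫ t in Ioi (0:ℝ), rexp (-t) := h
    _ = 1 / b := by rw [integral_exp_neg_Ioi_zero, smul_eq_mul, mul_one, one_div]

lemma key_prod {a l1 l2 : ℝ} (ha : 0 ≤ a) (h1 : 0 < l1) (h2 : 0 < l2) :
    ((expMeasure l1).prod (expMeasure l2)) {p : ℝ × ℝ | a * p.1 < p.2}
      = ENNReal.ofReal (l1 / (l1 + l2 * a)) := by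
  have hb : 0 < l1 + l2 * a := by positivity
  have : IsProbabilityMeasure (expMeasure l2) := isProbabilityMeasure_expMeasure h2
  have hS : MeasurableSet {p : ℝ × ℝ | a * p.1 < p.2} :=
    measurableSet_lt (measurable_fst.const_mul a) measurable_snd
  rw [Measure.prod_apply hS]
  have hpre : ∀ t : ℝ, (Prod.mk t ⁻¹' {p : ℝ × ℝ | a * p.1 < p.2}) = {y | a * t < y} :=
    fun t => rfl
  simp_rw [hpre]
  have hganti : Antitone (fun s : ℝ => expMeasure l2 {y | s < y}) := by
    intro u v huv
    exact measure_mono (fun y (hy : v < y) => lt_of_le_of_lt huv hy)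
  have hg : Measurable (fun t : ℝ => expMeasure l2 {y | a * t < y}) :=
    hganti.measurable.comp (measurable_const_mul a)
  have hpdf : Measurable (exponentialPDF l1) := (measurable_exponentialPDFReal l1).ennreal_ofReal
  rw [show expMeasure l1 = volume.withDensity (exponentialPDF l1) from rfl,
    lintegral_withDensity_eq_lintegral_mul _ hpdf hg]
  have hsplit : (∫⁻ t, (exponentialPDF l1 * fun t => expMeasure l2 {y | a * t < y}) t)
      = ∫⁻ t in Ioi (0:ℝ), (exponentialPDF l1 * fun t => expMeasure l2 {y | a * t < y}) t := by
    rw [← lintegral_indicator measurableSet_Ioi]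
    refine lintegral_congr_ae (ae_iff.2 (measure_mono_null (fun t ht => ?_) (volume_singleton (a := 0))))
    simp only [mem_setOf_eq, mem_singleton_iff] at ht ⊢
    by_contra h0
    rcases lt_or_gt_of_ne h0 with hneg | hpos
    · exact ht (by simp [indicator_of_notMem (notMem_Ioi.2 hneg.le),
        exponentialPDF_of_neg hneg])
    · exact ht (by simp [indicator_of_mem (mem_Ioi.2 hpos)])
  rw [hsplit]
  have hcong : ∫⁻ t in Ioi (0:ℝ), (exponentialPDF l1 * fun t => expMeasure l2 {y | a * t < y}) t
      = ∫⁻ t in Ioi (0:ℝ), ENNReal.ofReal (l1 * rexp (-((l1 + l2 * a) * t))) := by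
    refine setLIntegral_congr_fun measurableSet_Ioi (fun t ht => ?_)
    have ht' : (0:ℝ) ≤ t := le_of_lt ht
    simp only [Pi.mul_apply]
    rw [exponentialPDF_of_nonneg ht', expMeasure_survival' h2 (by positivity),
      ← ENNReal.ofReal_mul (by positivity)]
    congr 1
    rw [mul_assoc, ← Real.exp_add]
    congr 2
    ring
  rw [hcong]
  rw [← ofReal_integral_eq_lintegral_ofReal]
  · rw [integral_const_mul, integral_exp_neg_mul_Ioi_zero' hb]
    congr 1
    field_simp
  · have := exp_neg_integrableOn_Ioi 0 hb
    simp_rw [neg_mul] at this ⊢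
    exact this.const_mul l1
  · exact ae_of_all _ fun t => by positivity

lemma expMeasure_Iic_zero' {r : ℝ} (hr : 0 < r) : expMeasure r (Iic 0) = 0 := by
  simp [expMeasure_Iic' hr 0]

/-- Corollary 1: asymptotic outage probability in the high-power regime.
`ρi, ρri` are independent exponentials with means `Ωi, Ωri`, `c > 0` the
aggregate impairment parameter, and `SNDR_i^∞ = ρri / ((ρi + ρri) c)`. -/
theorem outage_probability_asymptotic
    {Ω : Type*} [MeasurableSpace Ω] (μ : Measure Ω) [IsProbabilityMeasure μ]
    (ρi ρri : Ω → ℝ) (hρi : Measurable ρi) (hρri : Measurable ρri)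
    (hindep : IndepFun ρi ρri μ)
    (Ωi Ωri : ℝ) (hΩi : 0 < Ωi) (hΩri : 0 < Ωri)
    (hlawi : Measure.map ρi μ = expMeasure (1 / Ωi))
    (hlawri : Measure.map ρri μ = expMeasure (1 / Ωri))
    (c : ℝ) (hc : 0 < c) (x : ℝ) :
    (0 ≤ x → x < 1 / c →
      (μ {ω | ρri ω / ((ρi ω + ρri ω) * c) ≤ x}).toReal
        = Ωi * c * x / (Ωri + c * x * (Ωi - Ωri))) ∧
    (1 / c ≤ x →
      (μ {ω | ρri ω / ((ρi ω + ρri ω) * c) ≤ x}).toReal = 1) := by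
  have hl1 : 0 < 1 / Ωi := by positivity
  have hl2 : 0 < 1 / Ωri := by positivity
  have hP1 : IsProbabilityMeasure (expMeasure (1 / Ωi)) := isProbabilityMeasure_expMeasure hl1
  have hP2 : IsProbabilityMeasure (expMeasure (1 / Ωri)) := isProbabilityMeasure_expMeasure hl2
  set ν : Measure (ℝ × ℝ) := (expMeasure (1 / Ωi)).prod (expMeasure (1 / Ωri)) with hν
  have hPν : IsProbabilityMeasure ν := by infer_instance
  have hmap : μ.map (fun ω => (ρi ω, ρri ω)) = ν := by
    rw [hν, ← hlawi, ← hlawri]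
    exact (indepFun_iff_map_prod_eq_prod_map_map hρi.aemeasurable hρri.aemeasurable).1 hindep
  set S : Set (ℝ × ℝ) := {p | p.2 / ((p.1 + p.2) * c) ≤ x} with hSdef
  have hSmeas : MeasurableSet S :=
    measurableSet_le (measurable_snd.div ((measurable_fst.add measurable_snd).mul_const c))
      measurable_const
  have hμν : μ {ω | ρri ω / ((ρi ω + ρri ω) * c) ≤ x} = ν S := by
    rw [← hmap, Measure.map_apply (hρi.prodMk hρri) hSmeas]
    rfl
  set pos : Set (ℝ × ℝ) := {p | 0 < p.1 ∧ 0 < p.2} with hposdef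
  have hposmeas : MeasurableSet pos :=
    (measurableSet_lt measurable_const measurable_fst).inter
      (measurableSet_lt measurable_const measurable_snd)
  have hnull : ν posᶜ = 0 := by
    have h0 : ν ((Iic (0:ℝ) ×ˢ (univ : Set ℝ)) ∪ ((univ : Set ℝ) ×ˢ Iic (0:ℝ))) = 0 := by
      refine measure_union_null ?_ ?_
      · rw [hν, Measure.prod_prod, expMeasure_Iic_zero' hl1, zero_mul]
      · rw [hν, Measure.prod_prod, expMeasure_Iic_zero' hl2, mul_zero]
    refine measure_mono_null ?_ h0
    intro p hp
    simp only [hposdef, mem_compl_iff, mem_setOf_eq, not_and_or, not_lt] at hp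
    rcases hp with h | h
    · exact Or.inl ⟨h, mem_univ _⟩
    · exact Or.inr ⟨mem_univ _, h⟩
  have hposone : ν pos = 1 := by
    rwa [prob_compl_eq_zero_iff hposmeas] at hnull
  constructor
  · -- 0 ≤ x < 1/c
    intro hx0 hx1
    have hcx : c * x < 1 := by
      rw [lt_div_iff₀ hc] at hx1; linarith
    have h1cx : 0 < 1 - c * x := by linarith
    set a : ℝ := c * x / (1 - c * x) with hadef
    have ha : 0 ≤ a := div_nonneg (by positivity) h1cx.le
    set T : Set (ℝ × ℝ) := {p | p.2 ≤ a * p.1} with hTdef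
    have hST : ∀ p : ℝ × ℝ, 0 < p.1 → 0 < p.2 → (p ∈ S ↔ p ∈ T) := by
      intro p h1 h2
      have hd : 0 < (p.1 + p.2) * c := by positivity
      have e1 : p ∈ S ↔ p.2 ≤ x * ((p.1 + p.2) * c) := div_le_iff₀ hd
      have e2 : p ∈ T ↔ p.2 * (1 - c * x) ≤ c * x * p.1 := by
        rw [hTdef, mem_setOf_eq, show a * p.1 = (c * x * p.1) / (1 - c * x) by
          rw [hadef]; field_simp, le_div_iff₀ h1cx]
      rw [e1, e2]
      constructor <;> intro h <;> nlinarith [h]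
    have hae : ν S = ν T := by
      refine measure_congr ?_
      rw [Filter.eventuallyEq_set]
      refine (ae_iff).2 (measure_mono_null ?_ hnull)
      intro p hp
      simp only [mem_setOf_eq] at hp
      simp only [mem_compl_iff, hposdef, mem_setOf_eq, not_and_or, not_lt]
      by_contra hcon
      push_neg at hcon
      exact hp (hST p hcon.1 hcon.2)
    have hTc : T = {p : ℝ × ℝ | a * p.1 < p.2}ᶜ := by
      ext p; simp [hTdef, not_lt]
    have hνT : ν T = 1 - ENNReal.ofReal ((1/Ωi) / (1/Ωi + (1/Ωri) * a)) := by
      rw [hTc, measure_compl (measurableSet_lt (measurable_fst.const_mul a) measurable_snd)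
        (measure_ne_top _ _), measure_univ, hν, key_prod ha hl1 hl2]
    have hq0 : 0 ≤ (1/Ωi) / (1/Ωi + (1/Ωri) * a) := by positivity
    have hq1 : (1/Ωi) / (1/Ωi + (1/Ωri) * a) ≤ 1 := by
      rw [div_le_one (by positivity)]
      nlinarith [mul_nonneg hl2.le ha]
    have htoReal : (ν S).toReal = 1 - (1/Ωi) / (1/Ωi + (1/Ωri) * a) := by
      rw [hae, hνT, ENNReal.toReal_sub_of_le (ENNReal.ofReal_le_one.2 hq1) (by simp)]
      rw [ENNReal.toReal_one, ENNReal.toReal_ofReal hq0]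
    rw [hμν, htoReal]
    have hD : 0 < Ωri + c * x * (Ωi - Ωri) := by nlinarith [mul_pos hΩri h1cx, mul_nonneg (mul_nonneg hc.le hx0) hΩi.le]
    have hb : 0 < 1/Ωi + (1/Ωri) * a := by positivity
    rw [hadef]
    field_simp
    ring
  · -- x ≥ 1/c
    intro hx
    have hsub : pos ⊆ S := by
      intro p hp
      obtain ⟨h1, h2⟩ := hp
      have hd : 0 < (p.1 + p.2) * c := by positivity
      show p.2 / ((p.1 + p.2) * c) ≤ x
      rw [div_le_iff₀ hd]
      have h3 : (1 / c) * ((p.1 + p.2) * c) ≤ x * ((p.1 + p.2) * c) :=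
        mul_le_mul_of_nonneg_right hx hd.le
      have h4 : (1 / c) * ((p.1 + p.2) * c) = p.1 + p.2 := by field_simp
      linarith
    have : ν S = 1 := le_antisymm prob_le_one (hposone ▸ measure_mono hsub)
    rw [hμν, this, ENNReal.toReal_one]
end

section
/- For a nonnegative random variable S with CDF F, and constants α, β > 0, it holds that E[α Q(√(2βS))] = (α√β/(2√π)) ∫₀^∞ e^{-βx} x^{-1/2} F(x) dx, where Q(x) = (1/√(2π)) ∫ₓ^∞ e^{-t²/2} dt is the Gaussian Q-function. -/
open MeasureTheory Real
open scoped ENNReal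

/-- The Gaussian Q-function `Q(x) = (1/√(2π)) ∫ₓ^∞ e^{-t²/2} dt`. -/
noncomputable def gaussQ (x : ℝ) : ℝ :=
  (1 / Real.sqrt (2 * Real.pi)) * ∫ t in Set.Ioi x, Real.exp (-t ^ 2 / 2)

noncomputable def serG (β : ℝ) (x : ℝ) : ℝ := Real.exp (-β * x) / Real.sqrt x

lemma serG_nonneg (β x : ℝ) : 0 ≤ serG β x :=
  div_nonneg (Real.exp_pos _).le (Real.sqrt_nonneg _)

lemma serG_measurable (β : ℝ) : Measurable (serG β ·) :=
  ((measurable_id.const_mul (-β)).exp).div Real.continuous_sqrt.measurable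

lemma serG_integrable {β : ℝ} (hβ : 0 < β) : Integrable (serG β) := by
  have h0 : IntegrableOn (serG β) (Set.Ioi 0) := by
    have h := integrableOn_rpow_mul_exp_neg_mul_rpow (p := 1) (s := -(1/2)) (b := β)
      (by norm_num) one_pos hβ
    refine h.congr_fun (fun x hx => ?_) measurableSet_Ioi
    have hx0 : (0:ℝ) < x := hx
    dsimp only; rw [Real.rpow_one, Real.rpow_neg hx0.le, ← Real.sqrt_eq_rpow]
    rw [serG, div_eq_mul_inv, mul_comm]
  have h1 : IntegrableOn (serG β) (Set.Iic 0) := by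
    refine (integrable_zero _ _ _).integrableOn.congr_fun (fun x hx => ?_) measurableSet_Iic
    rw [serG, Real.sqrt_eq_zero'.mpr hx, div_zero]; rfl
  have : IntegrableOn (serG β) (Set.Iic 0 ∪ Set.Ioi 0) := h1.union h0
  rwa [Set.Iic_union_Ioi, integrableOn_univ] at this

lemma serG_intOn {β : ℝ} (hβ : 0 < β) (s : ℝ) : IntegrableOn (serG β) (Set.Ioi s) :=
  (serG_integrable hβ).integrableOn

lemma serJ_antitone {β : ℝ} (hβ : 0 < β) :
    Antitone (fun s => ∫ x in Set.Ioi s, serG β x) := by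
  intro a b hab
  refine setIntegral_mono_set (serG_intOn hβ a)
    (Filter.Eventually.of_forall fun x => serG_nonneg β x) ?_
  exact Filter.Eventually.of_forall (Set.Ioi_subset_Ioi hab)

lemma gaussQ_sqrt {β : ℝ} (hβ : 0 < β) {s : ℝ} (hs : 0 ≤ s) :
    gaussQ (Real.sqrt (2 * β * s))
      = Real.sqrt β / (2 * Real.sqrt Real.pi) * ∫ x in Set.Ioi s, serG β x := by
  have himg : (fun x => Real.sqrt (2 * β * x)) '' Set.Ioi s
      = Set.Ioi (Real.sqrt (2 * β * s)) := by
    ext y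
    constructor
    · rintro ⟨x, hx, rfl⟩
      exact Real.sqrt_lt_sqrt (by positivity) (by nlinarith [Set.mem_Ioi.mp hx])
    · intro hy
      have hy0 : 0 < y := lt_of_le_of_lt (Real.sqrt_nonneg _) hy
      have h2 : 2 * β * s < y ^ 2 := (Real.sqrt_lt' hy0).mp hy
      refine ⟨y ^ 2 / (2 * β), ?_, ?_⟩
      · have : s < y ^ 2 / (2 * β) := by
          rw [lt_div_iff₀ (by positivity)]; nlinarith
        exact this
      · show Real.sqrt (2 * β * (y ^ 2 / (2 * β))) = y
        have h3 : 2 * β * (y ^ 2 / (2 * β)) = y ^ 2 := by field_simp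
        rw [h3]
        exact Real.sqrt_sq hy0.le
  have hderiv : ∀ x ∈ Set.Ioi s,
      HasDerivWithinAt (fun x => Real.sqrt (2 * β * x))
        (1 / (2 * Real.sqrt (2 * β * x)) * (2 * β)) (Set.Ioi s) x := by
    intro x hx
    have hx0 : 0 < x := lt_of_le_of_lt hs hx
    have h1 : HasDerivAt (fun x : ℝ => 2 * β * x) (2 * β) x := by
      simpa using (hasDerivAt_id x).const_mul (2 * β)
    have h2 : HasDerivAt Real.sqrt (1 / (2 * Real.sqrt (2 * β * x))) (2 * β * x) :=
      Real.hasDerivAt_sqrt (by positivity)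
    exact (h2.comp x h1).hasDerivWithinAt
  have hinj : Set.InjOn (fun x => Real.sqrt (2 * β * x)) (Set.Ioi s) := by
    intro a ha b hb h
    have ha0 : (0:ℝ) < a := lt_of_le_of_lt hs ha
    have hb0 : (0:ℝ) < b := lt_of_le_of_lt hs hb
    have h2 : (2:ℝ) * β * a = 2 * β * b := by
      have := congrArg (· ^ 2) h
      simpa [Real.sq_sqrt, (by positivity : (0:ℝ) ≤ 2 * β * a),
        (by positivity : (0:ℝ) ≤ 2 * β * b)] using this
    have : (2:ℝ) * β ≠ 0 := by positivity
    exact mul_left_cancel₀ this h2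
  have hsub := integral_image_eq_integral_abs_deriv_smul measurableSet_Ioi hderiv hinj
    (fun t => Real.exp (-t ^ 2 / 2))
  rw [himg] at hsub
  rw [gaussQ, hsub]
  have hptw : ∀ x ∈ Set.Ioi s,
      |1 / (2 * Real.sqrt (2 * β * x)) * (2 * β)|
          • Real.exp (-Real.sqrt (2 * β * x) ^ 2 / 2)
        = (Real.sqrt β / Real.sqrt 2) * serG β x := by
    intro x hx
    have hx0 : 0 < x := lt_of_le_of_lt hs hx
    have hsq : Real.sqrt (2 * β * x) ^ 2 = 2 * β * x :=
      Real.sq_sqrt (by positivity)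
    have hmul : Real.sqrt (2 * β * x) = Real.sqrt 2 * Real.sqrt β * Real.sqrt x := by
      rw [Real.sqrt_mul (by positivity), Real.sqrt_mul (by norm_num)]
    have h2 : (0:ℝ) < Real.sqrt 2 := Real.sqrt_pos.mpr (by norm_num)
    have hb2 : (0:ℝ) < Real.sqrt β := Real.sqrt_pos.mpr hβ
    have hx2 : (0:ℝ) < Real.sqrt x := Real.sqrt_pos.mpr hx0
    have habs : |1 / (2 * Real.sqrt (2 * β * x)) * (2 * β)|
        = 1 / (2 * Real.sqrt (2 * β * x)) * (2 * β) := by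
      rw [abs_of_pos]; positivity
    rw [habs, smul_eq_mul, hsq, hmul, serG]
    have he : -(2 * β * x) / 2 = -β * x := by ring
    rw [he]
    have hbb : Real.sqrt β * Real.sqrt β = β := Real.mul_self_sqrt hβ.le
    field_simp
    linear_combination (-1 : ℝ) * hbb
  rw [setIntegral_congr_fun measurableSet_Ioi hptw, integral_const_mul]
  have hc : 1 / Real.sqrt (2 * Real.pi) * (Real.sqrt β / Real.sqrt 2)
      = Real.sqrt β / (2 * Real.sqrt Real.pi) := by
    have h22 : Real.sqrt 2 * Real.sqrt 2 = 2 := Real.mul_self_sqrt (by norm_num)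
    rw [Real.sqrt_mul (by norm_num), div_mul_div_comm, one_mul]
    congr 1
    linear_combination Real.sqrt Real.pi * h22
  rw [← mul_assoc, hc]

/-- Integration-by-parts reformulation of the average symbol error rate:
for a nonnegative random variable `S` with CDF `F`,
`E[α Q(√(2βS))] = (α√β/(2√π)) ∫₀^∞ e^{-βx} x^{-1/2} F(x) dx`. -/
theorem ser_reformulation
    {Ω : Type*} [MeasurableSpace Ω] (μ : Measure Ω) [IsProbabilityMeasure μ]
    (S : Ω → ℝ) (hS : Measurable S) (hSnonneg : ∀ ω, 0 ≤ S ω)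
    (α β : ℝ) (hα : 0 < α) (hβ : 0 < β)
    (F : ℝ → ℝ) (hF : ∀ x, F x = (μ {ω | S ω ≤ x}).toReal) :
    ∫ ω, α * gaussQ (Real.sqrt (2 * β * S ω)) ∂μ
      = α * Real.sqrt β / (2 * Real.sqrt Real.pi) *
          ∫ x in Set.Ioi (0 : ℝ), Real.exp (-β * x) / Real.sqrt x * F x := by
  set J : ℝ → ℝ := fun s => ∫ x in Set.Ioi s, serG β x with hJdef
  have hJmeas : Measurable J := (serJ_antitone hβ).measurable
  have hJnonneg : ∀ s, 0 ≤ J s := fun s =>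
    setIntegral_nonneg measurableSet_Ioi fun x _ => serG_nonneg β x
  have key : ∀ ω, α * gaussQ (Real.sqrt (2 * β * S ω))
      = (α * (Real.sqrt β / (2 * Real.sqrt Real.pi))) * J (S ω) := by
    intro ω
    rw [gaussQ_sqrt hβ (hSnonneg ω)]; ring
  simp_rw [key]
  rw [integral_const_mul]
  -- the Fubini step
  have hFmeas : Measurable F := by
    have hmono : Monotone F := by
      intro a b hab
      rw [hF a, hF b]
      exact ENNReal.toReal_mono (measure_ne_top μ _)
        (measure_mono fun ω (h : S ω ≤ a) => le_trans h hab)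
    exact hmono.measurable
  have hFnonneg : ∀ x, 0 ≤ F x := fun x => (hF x) ▸ ENNReal.toReal_nonneg
  have hset : MeasurableSet {p : Ω × ℝ | S p.1 ≤ p.2} :=
    measurableSet_le (hS.comp measurable_fst) measurable_snd
  have main : ∫ ω, J (S ω) ∂μ
      = ∫ x in Set.Ioi (0:ℝ), serG β x * F x := by
    rw [integral_eq_lintegral_of_nonneg_ae
      (Filter.Eventually.of_forall fun ω => hJnonneg (S ω))
      ((hJmeas.comp hS).aestronglyMeasurable)]
    rw [integral_eq_lintegral_of_nonneg_ae
      (Filter.Eventually.of_forall fun x => mul_nonneg (serG_nonneg β x) (hFnonneg x))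
      (((serG_measurable β).mul hFmeas).aestronglyMeasurable)]
    congr 1
    have step1 : ∀ ω, ENNReal.ofReal (J (S ω))
        = ∫⁻ x in Set.Ioi (0:ℝ), ENNReal.ofReal (serG β x)
            * Set.indicator {p : Ω × ℝ | S p.1 ≤ p.2} 1 (ω, x) := by
      intro ω
      rw [hJdef]
      rw [ofReal_integral_eq_lintegral_ofReal (serG_intOn hβ (S ω))
        (Filter.Eventually.of_forall fun x => serG_nonneg β x)]
      have hind : ∀ x : ℝ, ENNReal.ofReal (serG β x)
          * Set.indicator {p : Ω × ℝ | S p.1 ≤ p.2} 1 (ω, x)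
          = Set.indicator (Set.Ici (S ω)) (fun x => ENNReal.ofReal (serG β x)) x := by
        intro x
        by_cases h : S ω ≤ x <;>
          simp [Set.indicator_apply, h, Set.mem_Ici, Set.mem_setOf_eq]
      simp_rw [hind]
      rw [lintegral_indicator measurableSet_Ici, Measure.restrict_restrict measurableSet_Ici]
      refine (setLIntegral_congr ?_).symm
      have h1 : (Set.Ici (S ω) ∩ Set.Ioi 0 : Set ℝ)
          =ᵐ[volume] (Set.Ioi (S ω) ∩ Set.Ioi 0 : Set ℝ) :=
        MeasureTheory.ae_eq_set_inter Ioi_ae_eq_Ici.symm (Filter.EventuallyEq.refl _ _)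
      have h2 : Set.Ioi (S ω) ∩ Set.Ioi 0 = Set.Ioi (S ω) := by
        rw [Set.Ioi_inter_Ioi]
        exact congrArg Set.Ioi (max_eq_left (hSnonneg ω))
      exact h2 ▸ h1
    simp_rw [step1]
    rw [lintegral_lintegral_swap]
    · refine setLIntegral_congr_fun measurableSet_Ioi ?_
      intro x hx
      have hmeas : Measurable fun ω : Ω =>
          Set.indicator {p : Ω × ℝ | S p.1 ≤ p.2} (1 : Ω × ℝ → ℝ≥0∞) (ω, x) :=
        (measurable_one.indicator hset).comp measurable_prodMk_right
      dsimp only; rw [lintegral_const_mul _ hmeas]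
      have hone : ∫⁻ ω, Set.indicator {p : Ω × ℝ | S p.1 ≤ p.2} 1 (ω, x) ∂μ
          = μ {ω | S ω ≤ x} := by
        have heq : ∀ ω : Ω, Set.indicator {p : Ω × ℝ | S p.1 ≤ p.2} (1 : Ω × ℝ → ℝ≥0∞) (ω, x)
            = Set.indicator {ω | S ω ≤ x} 1 ω := by
          intro ω
          by_cases h : S ω ≤ x <;> simp [Set.indicator_apply, h]
        simp_rw [heq]
        exact lintegral_indicator_one (hS measurableSet_Iic)
      rw [hone, ENNReal.ofReal_mul (serG_nonneg β x), hF x,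
        ENNReal.ofReal_toReal (measure_ne_top μ _)]
    · exact ((((serG_measurable β).comp measurable_snd).ennreal_ofReal).mul
        ((measurable_one : Measurable (1 : Ω × ℝ → ℝ≥0∞)).indicator hset)).aemeasurable
  rw [main]
  have hserg : ∀ x, serG β x * F x = Real.exp (-β * x) / Real.sqrt x * F x := fun x => rfl
  simp_rw [hserg]
  ring
end

section
/- Let ρ1, ρ2 be independent exponentials with means Ω1, Ω2 > 0 and let c > 0. The random variable T = ρ2/((ρ1+ρ2)c) has CDF F(x) = Ω1 c x/(Ω2 + cx(Ω1 − Ω2)) on [0, 1/c), and F is continuous and strictly increasing on [0, 1/c) with F(0) = 0 and lim_{x→(1/c)⁻} F(x) = 1. -/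
open MeasureTheory ProbabilityTheory Filter
open Real Set

lemma my_integral_exp_neg_mul_Ioi {b : ℝ} (hb : 0 < b) :
    ∫ x in Ioi (0:ℝ), Real.exp (-(b * x)) = 1 / b := by
  have h := integral_comp_mul_left_Ioi (fun y => Real.exp (-y)) 0 hb
  simp only [mul_zero] at h
  rw [h, integral_exp_neg_Ioi_zero, smul_eq_mul, mul_one, one_div]

lemma my_expMeasure_eq (r : ℝ) : expMeasure r = volume.withDensity (exponentialPDF r) := rfl

lemma my_expMeasure_Iic {r : ℝ} (hr : 0 < r) (x : ℝ) :
    expMeasure r (Iic x) = ENNReal.ofReal (if 0 ≤ x then 1 - rexp (-(r * x)) else 0) := by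
  rw [my_expMeasure_eq, withDensity_apply _ measurableSet_Iic,
    lintegral_exponentialPDF_eq_antiDeriv hr x]

lemma my_prod_exp_le {r1 r2 k : ℝ} (h1 : 0 < r1) (h2 : 0 < r2) (hk : 0 ≤ k) :
    (expMeasure r1).prod (expMeasure r2) {p : ℝ × ℝ | p.2 ≤ k * p.1}
      = ENNReal.ofReal (r2 * k / (r1 + r2 * k)) := by
  haveI := isProbabilityMeasure_expMeasure h1
  haveI := isProbabilityMeasure_expMeasure h2
  have hS : MeasurableSet {p : ℝ × ℝ | p.2 ≤ k * p.1} :=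
    measurableSet_le measurable_snd (measurable_fst.const_mul k)
  set h : ℝ → ENNReal := fun a => ENNReal.ofReal (if 0 ≤ a then 1 - rexp (-(r2 * a)) else 0)
    with hh_def
  have hh : Measurable h := by
    apply Measurable.ennreal_ofReal
    exact Measurable.ite measurableSet_Ici
      (measurable_const.sub (((measurable_id.const_mul r2).neg).exp)) measurable_const
  have hpdf : Measurable (exponentialPDF r1) :=
    (measurable_exponentialPDFReal r1).ennreal_ofReal
  rw [Measure.prod_apply hS]
  have hpre : (fun s : ℝ => expMeasure r2 (Prod.mk s ⁻¹' {p : ℝ × ℝ | p.2 ≤ k * p.1}))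
      = fun s => h (k * s) := by
    funext s
    have : (Prod.mk s ⁻¹' {p : ℝ × ℝ | p.2 ≤ k * p.1}) = Iic (k * s) := rfl
    rw [this, my_expMeasure_Iic h2]
  have hm : Measurable fun s : ℝ => h (k * s) := hh.comp (measurable_const_mul k)
  rw [hpre, my_expMeasure_eq, lintegral_withDensity_eq_lintegral_mul volume hpdf hm]
  have hsplit := lintegral_add_compl (μ := volume)
    (fun s => (exponentialPDF r1 * fun s => h (k * s)) s) (measurableSet_Ioi (a := (0:ℝ)))
  rw [← hsplit, compl_Ioi]
  have hA : ∫⁻ s in Iic (0:ℝ), (exponentialPDF r1 * fun s => h (k * s)) s = 0 := by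
    rw [setLIntegral_congr_fun measurableSet_Iic
      (fun s (hs : s ≤ 0) => ?_), lintegral_zero]
    rcases lt_or_eq_of_le hs with hs' | hs'
    · simp [exponentialPDF_of_neg hs']
    · subst hs'
      have h0 : h (k * 0) = 0 := by simp [hh_def]
      simp only [Pi.mul_apply]
      rw [h0, mul_zero]
  set f : ℝ → ℝ := fun s => r1 * rexp (-(r1 * s)) - r1 * rexp (-((r1 + r2 * k) * s)) with hf_def
  have hB : ∫⁻ s in Ioi (0:ℝ), (exponentialPDF r1 * fun s => h (k * s)) s
      = ENNReal.ofReal (r2 * k / (r1 + r2 * k)) := by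
    have hcong : ∀ s ∈ Ioi (0:ℝ), (exponentialPDF r1 * fun s => h (k * s)) s
        = ENNReal.ofReal (f s) := by
      intro s hs
      have hs0 : (0:ℝ) ≤ s := le_of_lt hs
      have hks : 0 ≤ k * s := mul_nonneg hk hs0
      simp only [Pi.mul_apply, hh_def, if_pos hks, exponentialPDF_of_nonneg hs0]
      rw [← ENNReal.ofReal_mul (by positivity)]
      congr 1
      rw [hf_def, mul_sub, mul_one, mul_assoc, ← Real.exp_add,
        show -(r1 * s) + -(r2 * (k * s)) = -((r1 + r2 * k) * s) by ring]
    rw [setLIntegral_congr_fun measurableSet_Ioi hcong]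
    have hrk : 0 < r1 + r2 * k := by positivity
    have hint1 : IntegrableOn (fun s : ℝ => r1 * rexp (-(r1 * s))) (Ioi 0) := by
      simp only [neg_mul_eq_neg_mul]
      exact (exp_neg_integrableOn_Ioi 0 h1).const_mul r1
    have hint2 : IntegrableOn (fun s : ℝ => r1 * rexp (-((r1 + r2 * k) * s))) (Ioi 0) := by
      simp only [neg_mul_eq_neg_mul]
      exact (exp_neg_integrableOn_Ioi 0 hrk).const_mul r1
    have hint : IntegrableOn f (Ioi 0) := hint1.sub hint2
    have hnn : 0 ≤ᵐ[volume.restrict (Ioi (0:ℝ))] f := by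
      refine (ae_restrict_iff' measurableSet_Ioi).mpr (ae_of_all _ fun s hs => ?_)
      have : rexp (-((r1 + r2 * k) * s)) ≤ rexp (-(r1 * s)) := by
        apply Real.exp_le_exp.mpr
        nlinarith [mul_nonneg (mul_nonneg h2.le hk) (le_of_lt hs)]
      simp only [Pi.zero_apply, hf_def, sub_nonneg]
      exact mul_le_mul_of_nonneg_left this h1.le
    rw [← ofReal_integral_eq_lintegral_ofReal hint hnn]
    congr 1
    rw [hf_def]
    rw [integral_sub hint1 hint2, integral_const_mul, integral_const_mul,
      my_integral_exp_neg_mul_Ioi h1, my_integral_exp_neg_mul_Ioi hrk]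
    field_simp
    ring
  rw [hA, hB, add_zero]

/-- The asymptotic SNDR `T = ρ2/((ρ1+ρ2)c)`, with `ρ1, ρ2` independent
exponentials of means `Ω1, Ω2`, has CDF `F(x) = Ω1 c x/(Ω2 + cx(Ω1 − Ω2))`
on `[0, 1/c)`; this function is continuous and strictly increasing there,
vanishes at `0`, and tends to `1` as `x → (1/c)⁻`. -/
theorem asymptotic_sndr_cdf_properties
    {Ωs : Type*} [MeasurableSpace Ωs] (μ : Measure Ωs) [IsProbabilityMeasure μ]
    (ρ1 ρ2 : Ωs → ℝ) (hρ1 : Measurable ρ1) (hρ2 : Measurable ρ2)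
    (hindep : IndepFun ρ1 ρ2 μ)
    (Ω1 Ω2 : ℝ) (hΩ1 : 0 < Ω1) (hΩ2 : 0 < Ω2)
    (hlaw1 : Measure.map ρ1 μ = expMeasure (1 / Ω1))
    (hlaw2 : Measure.map ρ2 μ = expMeasure (1 / Ω2))
    (c : ℝ) (hc : 0 < c)
    (F : ℝ → ℝ) (hF : ∀ x, F x = Ω1 * c * x / (Ω2 + c * x * (Ω1 - Ω2))) :
    (∀ x ∈ Set.Ico (0 : ℝ) (1 / c),
      (μ {ω | ρ2 ω / ((ρ1 ω + ρ2 ω) * c) ≤ x}).toReal = F x) ∧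
    ContinuousOn F (Set.Ico 0 (1 / c)) ∧
    StrictMonoOn F (Set.Ico 0 (1 / c)) ∧
    F 0 = 0 ∧
    Tendsto F (nhdsWithin (1 / c) (Set.Iio (1 / c))) (nhds 1) := by
  have hr1 : 0 < 1 / Ω1 := by positivity
  have hr2 : 0 < 1 / Ω2 := by positivity
  have hden : ∀ y, 0 ≤ y → c * y ≤ 1 → 0 < Ω2 + c * y * (Ω1 - Ω2) := by
    intro y h0 h1
    have hu0 : 0 ≤ c * y := mul_nonneg hc.le h0
    rcases le_total Ω2 Ω1 with h | h
    · nlinarith [mul_nonneg hu0 (sub_nonneg.mpr h)]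
    · nlinarith [mul_nonneg (sub_nonneg.mpr h1) (sub_nonneg.mpr h)]
  have hcy : ∀ y ∈ Set.Ico (0:ℝ) (1/c), c * y < 1 := by
    intro y hy
    have := (lt_div_iff₀ hc).mp hy.2
    linarith [this]
  refine ⟨?_, ?_, ?_, ?_, ?_⟩
  · -- the CDF formula
    intro x hx
    obtain ⟨hx0, hxc⟩ := hx
    have hcx : c * x < 1 := hcy x ⟨hx0, hxc⟩
    have hd : 0 < 1 - c * x := by linarith
    set k : ℝ := c * x / (1 - c * x) with hk_def
    have hk : 0 ≤ k := by positivity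
    -- a.e. positivity of ρ1, ρ2
    have hpos : ∀ (ρ : Ωs → ℝ) (Ω0 : ℝ), Measurable ρ → 0 < Ω0 →
        Measure.map ρ μ = expMeasure (1 / Ω0) → ∀ᵐ ω ∂μ, 0 < ρ ω := by
      intro ρ Ω0 hm hΩ0 hlaw
      have h0 : μ (ρ ⁻¹' Set.Iic 0) = 0 := by
        rw [← Measure.map_apply hm measurableSet_Iic, hlaw,
          my_expMeasure_Iic (by positivity)]
        norm_num
      rw [ae_iff]
      convert h0 using 2
      ext ω; simp [not_lt]
    have hpos1 := hpos ρ1 Ω1 hρ1 hΩ1 hlaw1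
    have hpos2 := hpos ρ2 Ω2 hρ2 hΩ2 hlaw2
    have hsets : {ω | ρ2 ω / ((ρ1 ω + ρ2 ω) * c) ≤ x} =ᵐ[μ] {ω | ρ2 ω ≤ k * ρ1 ω} := by
      rw [Filter.eventuallyEq_set]
      filter_upwards [hpos1, hpos2] with ω h1 h2
      rw [div_le_iff₀ (by positivity), hk_def,
        show c * x / (1 - c * x) * ρ1 ω = c * x * ρ1 ω / (1 - c * x) by ring,
        le_div_iff₀ hd]
      constructor <;> intro hle <;> nlinarith
    have hS : MeasurableSet {p : ℝ × ℝ | p.2 ≤ k * p.1} :=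
      measurableSet_le measurable_snd (measurable_fst.const_mul k)
    have hμ : μ {ω | ρ2 ω / ((ρ1 ω + ρ2 ω) * c) ≤ x}
        = ENNReal.ofReal ((1/Ω2) * k / ((1/Ω1) + (1/Ω2) * k)) := by
      calc μ {ω | ρ2 ω / ((ρ1 ω + ρ2 ω) * c) ≤ x}
          = μ {ω | ρ2 ω ≤ k * ρ1 ω} := measure_congr hsets
        _ = Measure.map (fun ω => (ρ1 ω, ρ2 ω)) μ {p : ℝ × ℝ | p.2 ≤ k * p.1} := by
            rw [Measure.map_apply (hρ1.prodMk hρ2) hS]; rfl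
        _ = ((expMeasure (1/Ω1)).prod (expMeasure (1/Ω2))) {p : ℝ × ℝ | p.2 ≤ k * p.1} := by
            rw [(indepFun_iff_map_prod_eq_prod_map_map hρ1.aemeasurable
              hρ2.aemeasurable).mp hindep, hlaw1, hlaw2]
        _ = ENNReal.ofReal ((1/Ω2) * k / ((1/Ω1) + (1/Ω2) * k)) := my_prod_exp_le hr1 hr2 hk
    rw [hμ, ENNReal.toReal_ofReal (by positivity), hF]
    have hpos2' : 0 < Ω2 + c * x * (Ω1 - Ω2) := hden x hx0 hcx.le
    have hpos1' : 0 < 1/Ω1 + 1/Ω2 * k :=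
      add_pos_of_pos_of_nonneg hr1 (mul_nonneg hr2.le hk)
    rw [div_eq_div_iff hpos1'.ne' hpos2'.ne', hk_def]
    field_simp
    ring
  · -- continuity
    rw [funext hF]
    apply ContinuousOn.div (by fun_prop) (by fun_prop)
    intro y hy
    exact (hden y hy.1 (hcy y hy).le).ne'
  · -- strict monotonicity
    intro a ha b hb hab
    rw [hF a, hF b, div_lt_div_iff₀ (hden a ha.1 (hcy a ha).le) (hden b hb.1 (hcy b hb).le)]
    nlinarith [mul_pos (mul_pos (mul_pos hΩ1 hc) hΩ2) (sub_pos.mpr hab)]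
  · rw [hF]; simp
  · -- limit
    have hc1 : c * (1 / c) = 1 := by field_simp
    have hdc : Ω2 + c * (1/c) * (Ω1 - Ω2) = Ω1 := by rw [hc1]; ring
    have hF1 : F (1/c) = 1 := by
      rw [hF, hdc]
      field_simp
    have hcont : ContinuousAt F (1/c) := by
      rw [funext hF]
      apply ContinuousAt.div (by fun_prop) (by fun_prop)
      rw [hdc]; exact hΩ1.ne'
    have ht : Tendsto F (nhdsWithin (1/c) (Set.Iio (1/c))) (nhds (F (1/c))) :=
      hcont.tendsto.mono_left nhdsWithin_le_nhds
    rwa [hF1] at ht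
end
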